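/- Let G be a triangle-free graph, let F_1, …, F_n be matchings of size n in G, and let R be a rainbow matching of maximum size. Let G₁ be an unrepresented matching, let e, f ∈ R, and let g_e, g_f, g_{ef} ∈ G₁ witness that {e, f} is half-G₁-wasteful (in particular g_e intersects e and no other edge of R). Suppose G₂ is another unrepresented matching, G₂ ≠ G₁, and g'_e ∈ G₂ intersects e in one vertex and intersects no other edge of R. Then g_e, g'_e and e share a common vertex. -/

import Mathlib

/-! Let `x ∈ g_e ∩ e` and `y ∈ g'_e ∩ e`, and suppose the three edges have no common vertex,
so `x ≠ y`. If `g_e` and `g'_e` met in a vertex `a`, then `x, y, a` would span a triangle.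
Hence `g_e` and `g'_e` are disjoint, and replacing `e` in `R` by `g_e` and `g'_e`, which
come from the two unrepresented matchings and avoid all other edges of `R`, yields a larger
rainbow matching. -/

/-- Two graph edges intersect (share a vertex). -/
def Meets {V : Type*} (e f : Sym2 V) : Prop := ∃ v, v ∈ e ∧ v ∈ f

/-- `g` intersects `e` and no other edge of the matching `R`. -/
def MeetsOnly {V : Type*} (R : Finset (Sym2 V)) (g e : Sym2 V) : Prop :=
  Meets g e ∧ ∀ f ∈ R, f ≠ e → ¬ Meets g f

open Finset

namespace SimpleGraph

variable {V : Type*} {G : SimpleGraph V}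

lemma cliqueFree_three_of_forall_isCycle_length_ne_three
    (h : ∀ (v : V) (w : G.Walk v v), w.IsCycle → w.length ≠ 3) : G.CliqueFree 3 := fun s hs => by
  obtain ⟨u, w, hw, hlen⟩ := is3Clique_iff_exists_cycle_length_three.1 ⟨s, hs⟩
  exact h u w hw hlen

lemma exists_mem_mem_mem_of_cliqueFree_three [DecidableEq V] (hG : G.CliqueFree 3)
    {e g g' : Sym2 V} (he : e ∈ G.edgeSet) (hg : g ∈ G.edgeSet) (hg' : g' ∈ G.edgeSet)
    (hge : Meets g e) (hg'e : Meets g' e) (hgg' : Meets g g') :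
    ∃ v, v ∈ g ∧ v ∈ g' ∧ v ∈ e := by
  obtain ⟨x, hxg, hxe⟩ := hge
  obtain ⟨y, hyg', hye⟩ := hg'e
  obtain ⟨a, hag, hag'⟩ := hgg'
  by_cases hxy : x = y
  · exact ⟨x, hxg, hxy ▸ hyg', hxe⟩
  by_cases hax : a = x
  · exact ⟨x, hxg, hax ▸ hag', hxe⟩
  by_cases hay : a = y
  · exact ⟨y, hay ▸ hag, hyg', hye⟩
  have hadj {s : Sym2 V} (hs : s ∈ G.edgeSet) {u v : V} (hu : u ∈ s) (hv : v ∈ s) (huv : u ≠ v) :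
      G.Adj u v :=
    G.adj_iff_exists_edge.2 ⟨huv, s, hs, hu, hv⟩
  exact (hG {x, y, a} <| is3Clique_triple_iff.2
    ⟨hadj he hxe hye hxy, hadj hg hxg hag (Ne.symm hax), hadj hg' hyg' hag' (Ne.symm hay)⟩).elim

end SimpleGraph

section Rainbow

variable {V ι : Type*}

def IsRainbow (F : ι → Finset (Sym2 V)) (J : Finset ι) (d : ι → Sym2 V) : Prop :=
  (∀ i ∈ J, d i ∈ F i) ∧ ∀ i ∈ J, ∀ j ∈ J, i ≠ j → ∀ v, v ∈ d i → v ∉ d j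

variable {F : ι → Finset (Sym2 V)} {J : Finset ι} {d : ι → Sym2 V}

lemma IsRainbow.mono {J' : Finset ι} (h : IsRainbow F J d) (hJ' : J' ⊆ J) :
    IsRainbow F J' d :=
  ⟨fun i hi => h.1 i (hJ' hi), fun i hi j hj => h.2 i (hJ' hi) j (hJ' hj)⟩

lemma IsRainbow.insert [DecidableEq ι] (h : IsRainbow F J d) {i : ι} (hi : i ∉ J)
    {g : Sym2 V} (hg : g ∈ F i) (hgd : ∀ j ∈ J, ∀ v, v ∈ g → v ∉ d j) :
    IsRainbow F (insert i J) (Function.update d i g) := by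
  have hupd : ∀ j ∈ J, Function.update d i g j = d j := fun j hj =>
    Function.update_of_ne (ne_of_mem_of_not_mem hj hi) g d
  refine ⟨?_, ?_⟩
  · simp only [forall_mem_insert, Function.update_self]
    exact ⟨hg, fun j hj => hupd j hj ▸ h.1 j hj⟩
  · simp only [forall_mem_insert, Function.update_self]
    refine ⟨⟨fun hii => absurd rfl hii, fun j hj _ v hvg => hupd j hj ▸ hgd j hj v hvg⟩,
      fun j hj => ⟨fun _ v hvd hvg => hgd j hj v hvg (hupd j hj ▸ hvd), fun k hk hjk => ?_⟩⟩
    rw [hupd j hj, hupd k hk]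
    exact h.2 j hj k hk hjk

lemma IsRainbow.not_mem_of_meetsOnly [DecidableEq V] (h : IsRainbow F J d) {i₀ j : ι}
    (hi₀ : i₀ ∈ J) (hj : j ∈ J) (hji₀ : j ≠ i₀) {g : Sym2 V}
    (hg : MeetsOnly (J.image d) g (d i₀)) : ∀ v, v ∈ g → v ∉ d j := by
  -- `d j` and `d i₀` are disjoint and edges are nonempty
  have hne : d j ≠ d i₀ := fun hdj =>
    h.2 j hj i₀ hi₀ hji₀ _ (Sym2.out_fst_mem (d j)) (hdj ▸ Sym2.out_fst_mem (d j))
  exact fun v hvg hvd => hg.2 (d j) (mem_image_of_mem d hj) hne ⟨v, hvg, hvd⟩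

lemma IsRainbow.exists_card_eq_add_one_of_exchange [DecidableEq ι] (h : IsRainbow F J d)
    {i₀ i₁ i₂ : ι} (hi₀ : i₀ ∈ J) (hi₁ : i₁ ∉ J) (hi₂ : i₂ ∉ J) (hne : i₂ ≠ i₁)
    {g₁ g₂ : Sym2 V} (hg₁ : g₁ ∈ F i₁) (hg₂ : g₂ ∈ F i₂) (hg₁₂ : ∀ v, v ∈ g₁ → v ∉ g₂)
    (hg₁d : ∀ j ∈ J.erase i₀, ∀ v, v ∈ g₁ → v ∉ d j)
    (hg₂d : ∀ j ∈ J.erase i₀, ∀ v, v ∈ g₂ → v ∉ d j) :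
    ∃ J' d', IsRainbow F J' d' ∧ J'.card = J.card + 1 := by
  have hrest : J.erase i₀ ⊆ J := erase_subset i₀ J
  have hi₂rest : i₂ ∉ J.erase i₀ := fun h => hi₂ (hrest h)
  have hi₁rest : i₁ ∉ Insert.insert i₂ (J.erase i₀) := by
    simp only [mem_insert, not_or]
    exact ⟨Ne.symm hne, fun h => hi₁ (hrest h)⟩
  refine ⟨_, _, ((h.mono hrest).insert hi₂rest hg₂ hg₂d).insert hi₁rest hg₁ ?_, ?_⟩
  · simp only [forall_mem_insert, Function.update_self]
    refine ⟨hg₁₂, fun j hj => ?_⟩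
    rw [Function.update_of_ne (ne_of_mem_of_not_mem hj hi₂rest)]
    exact hg₁d j hj
  · rw [card_insert_of_notMem hi₁rest, card_insert_of_notMem hi₂rest, card_erase_of_mem hi₀]
    have := card_pos.2 ⟨i₀, hi₀⟩
    omega

end Rainbow

theorem stmt_11_general {V : Type*} [DecidableEq V] (G : SimpleGraph V) (n : ℕ)
    (htf : ∀ (v : V) (w : G.Walk v v), w.IsCycle → w.length ≠ 3)
    (F : Fin n → Finset (Sym2 V))
    (hedges : ∀ i, ∀ e ∈ F i, e ∈ G.edgeSet)
    (I : Finset (Fin n)) (c : Fin n → Sym2 V)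
    (hc : ∀ i ∈ I, c i ∈ F i)
    (hdisj : ∀ i ∈ I, ∀ j ∈ I, i ≠ j → ∀ v, v ∈ c i → v ∉ c j)
    (hmax : ∀ (J : Finset (Fin n)) (d : Fin n → Sym2 V),
      (∀ i ∈ J, d i ∈ F i) →
      (∀ i ∈ J, ∀ j ∈ J, i ≠ j → ∀ v, v ∈ d i → v ∉ d j) →
      J.card ≤ I.card)
    (i₁ i₂ : Fin n) (hi₁ : i₁ ∉ I) (hi₂ : i₂ ∉ I) (hne : i₂ ≠ i₁)
    (e : Sym2 V) (he : e ∈ I.image c)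
    (ge : Sym2 V) (hge : ge ∈ F i₁)
    (hge_e : MeetsOnly (I.image c) ge e)
    (g'e : Sym2 V) (hg'e : g'e ∈ F i₂)
    (hg'e_e : MeetsOnly (I.image c) g'e e) :
    ∃ v, v ∈ ge ∧ v ∈ g'e ∧ v ∈ e := by
  obtain ⟨i₀, hi₀, rfl⟩ := mem_image.1 he
  by_contra hcommon
  have hdisjoint : ∀ v, v ∈ ge → v ∉ g'e := fun v hvge hvg'e =>
    hcommon <| SimpleGraph.exists_mem_mem_mem_of_cliqueFree_three
      (SimpleGraph.cliqueFree_three_of_forall_isCycle_length_ne_three htf)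
      (hedges i₀ _ (hc i₀ hi₀)) (hedges i₁ _ hge) (hedges i₂ _ hg'e) hge_e.1 hg'e_e.1
      ⟨v, hvge, hvg'e⟩
  have hR : IsRainbow F I c := ⟨hc, hdisj⟩
  have avoids {g : Sym2 V} (hg : MeetsOnly (I.image c) g (c i₀)) :
      ∀ j ∈ I.erase i₀, ∀ v, v ∈ g → v ∉ c j := fun j hj =>
    hR.not_mem_of_meetsOnly hi₀ (mem_of_mem_erase hj) (ne_of_mem_erase hj) hg
  obtain ⟨J, d, hJ, hcard⟩ := hR.exists_card_eq_add_one_of_exchange hi₀ hi₁ hi₂ hne hge hg'e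
    hdisjoint (avoids hge_e) (avoids hg'e_e)
  have := hmax J d hJ.1 hJ.2
  omega

/-- In a triangle-free graph with `F₁, …, Fₙ` matchings of size `n` and
`R = I.image c` a maximum-size rainbow matching: if `e, f ∈ R` and `g_e, g_f, g_{ef}` in
an unrepresented matching `F i₁` witness that `{e, f}` is half-`F i₁`-wasteful, and
`g'_e` belongs to another unrepresented matching `F i₂` and intersects `e` in one vertex
and no other edge of `R`, then `g_e`, `g'_e` and `e` share a common vertex. -/
theorem stmt_11 {V : Type*} [DecidableEq V] (G : SimpleGraph V) (n : ℕ)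
    (htf : ∀ (v : V) (w : G.Walk v v), w.IsCycle → w.length ≠ 3)
    (F : Fin n → Finset (Sym2 V))
    (hedges : ∀ i, ∀ e ∈ F i, e ∈ G.edgeSet)
    (hmatch : ∀ i, ∀ e ∈ F i, ∀ f ∈ F i, e ≠ f → ∀ v, v ∈ e → v ∉ f)
    (hsize : ∀ i, (F i).card = n)
    (I : Finset (Fin n)) (c : Fin n → Sym2 V)
    (hc : ∀ i ∈ I, c i ∈ F i)
    (hdisj : ∀ i ∈ I, ∀ j ∈ I, i ≠ j → ∀ v, v ∈ c i → v ∉ c j)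
    (hmax : ∀ (J : Finset (Fin n)) (d : Fin n → Sym2 V),
      (∀ i ∈ J, d i ∈ F i) →
      (∀ i ∈ J, ∀ j ∈ J, i ≠ j → ∀ v, v ∈ d i → v ∉ d j) →
      J.card ≤ I.card)
    (i₁ i₂ : Fin n) (hi₁ : i₁ ∉ I) (hi₂ : i₂ ∉ I) (hne : i₂ ≠ i₁)
    (e f : Sym2 V) (he : e ∈ I.image c) (hf : f ∈ I.image c) (hef : e ≠ f)
    (ge gf gef : Sym2 V) (hge : ge ∈ F i₁) (hgf : gf ∈ F i₁) (hgef : gef ∈ F i₁)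
    (hge_e : MeetsOnly (I.image c) ge e)
    (hgf_f : MeetsOnly (I.image c) gf f)
    (hgef_e : Meets gef e) (hgef_f : Meets gef f)
    (g'e : Sym2 V) (hg'e : g'e ∈ F i₂)
    (hg'e_e : MeetsOnly (I.image c) g'e e) :
    ∃ v, v ∈ ge ∧ v ∈ g'e ∧ v ∈ e :=
  stmt_11_general G n htf F hedges I c hc hdisj hmax i₁ i₂ hi₁ hi₂ hne e he ge hge hge_e g'e hg'e
    hg'e_e
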